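/- arXiv:2511.08451 — 3 statements merged into one kernel-verified Lean document; each statement's English description precedes it below -/
import Mathlib

section
/- For reals ρ > 0, α > 0, ℓ ≤ u, and any t ∈ ℝ, the unique minimizer (z, ξ) ∈ ℝ² of the function (ρ/2)·z² + (α/2)·ξ² − ρ·t·z subject to ℓ ≤ z + ξ ≤ u has z-component equal to the smoothed projection: z = t if ℓ ≤ t ≤ u, z = (ρ·t + α·ℓ)/(ρ+α) if t < ℓ, and z = (ρ·t + α·u)/(ρ+α) if t > u. -/
noncomputable def sproj (ρ α l u t : ℝ) : ℝ :=
  if t < l then (ρ * t + α * l) / (ρ + α)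
  else if u < t then (ρ * t + α * u) / (ρ + α)
  else t

lemma aux_min (ρ α t l u z ξ lam : ℝ) (hρ : 0 < ρ) (hα : 0 < α)
    (h1 : ρ * (z - t) = lam) (h2 : α * ξ = lam)
    (hl : l ≤ z + ξ) (hu : z + ξ ≤ u)
    (hsign : ∀ s : ℝ, l ≤ s → s ≤ u → 0 ≤ lam * (s - (z + ξ))) :
    (∃! p : ℝ × ℝ,
      (l ≤ p.1 + p.2 ∧ p.1 + p.2 ≤ u) ∧
      ∀ q : ℝ × ℝ, l ≤ q.1 + q.2 → q.1 + q.2 ≤ u →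
        ρ / 2 * p.1 ^ 2 + α / 2 * p.2 ^ 2 - ρ * t * p.1 ≤
        ρ / 2 * q.1 ^ 2 + α / 2 * q.2 ^ 2 - ρ * t * q.1) ∧
    ∀ p : ℝ × ℝ,
      (l ≤ p.1 + p.2 ∧ p.1 + p.2 ≤ u) →
      (∀ q : ℝ × ℝ, l ≤ q.1 + q.2 → q.1 + q.2 ≤ u →
        ρ / 2 * p.1 ^ 2 + α / 2 * p.2 ^ 2 - ρ * t * p.1 ≤
        ρ / 2 * q.1 ^ 2 + α / 2 * q.2 ^ 2 - ρ * t * q.1) →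
      p.1 = z := by
  have key : ∀ q : ℝ × ℝ, l ≤ q.1 + q.2 → q.1 + q.2 ≤ u →
      ρ / 2 * z ^ 2 + α / 2 * ξ ^ 2 - ρ * t * z +
        (ρ / 2 * (q.1 - z) ^ 2 + α / 2 * (q.2 - ξ) ^ 2) ≤
      ρ / 2 * q.1 ^ 2 + α / 2 * q.2 ^ 2 - ρ * t * q.1 := by
    intro q hql hqu
    have hs := hsign (q.1 + q.2) hql hqu
    have hid : ρ / 2 * q.1 ^ 2 + α / 2 * q.2 ^ 2 - ρ * t * q.1 -
        (ρ / 2 * z ^ 2 + α / 2 * ξ ^ 2 - ρ * t * z +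
          (ρ / 2 * (q.1 - z) ^ 2 + α / 2 * (q.2 - ξ) ^ 2)) =
        lam * (q.1 + q.2 - (z + ξ)) := by
      linear_combination (q.1 - z) * h1 + (q.2 - ξ) * h2
    linarith
  have hmin : ∀ q : ℝ × ℝ, l ≤ q.1 + q.2 → q.1 + q.2 ≤ u →
      ρ / 2 * z ^ 2 + α / 2 * ξ ^ 2 - ρ * t * z ≤
      ρ / 2 * q.1 ^ 2 + α / 2 * q.2 ^ 2 - ρ * t * q.1 := by
    intro q hql hqu
    have := key q hql hqu
    nlinarith [sq_nonneg (q.1 - z), sq_nonneg (q.2 - ξ)]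
  have huniq : ∀ p : ℝ × ℝ,
      (l ≤ p.1 + p.2 ∧ p.1 + p.2 ≤ u) →
      (∀ q : ℝ × ℝ, l ≤ q.1 + q.2 → q.1 + q.2 ≤ u →
        ρ / 2 * p.1 ^ 2 + α / 2 * p.2 ^ 2 - ρ * t * p.1 ≤
        ρ / 2 * q.1 ^ 2 + α / 2 * q.2 ^ 2 - ρ * t * q.1) →
      p = (z, ξ) := by
    intro p hpf hpmin
    have h1' := hpmin (z, ξ) (by simpa using hl) (by simpa using hu)
    have h2' := key p hpf.1 hpf.2
    simp only at h1'
    have hq : ρ / 2 * (p.1 - z) ^ 2 + α / 2 * (p.2 - ξ) ^ 2 ≤ 0 := by linarith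
    have hq1 : (p.1 - z) ^ 2 = 0 := by nlinarith [sq_nonneg (p.1 - z), sq_nonneg (p.2 - ξ)]
    have hq2 : (p.2 - ξ) ^ 2 = 0 := by nlinarith [sq_nonneg (p.1 - z), sq_nonneg (p.2 - ξ)]
    have hz1 : p.1 = z := by have := sq_eq_zero_iff.mp hq1; linarith
    have hz2 : p.2 = ξ := by have := sq_eq_zero_iff.mp hq2; linarith
    exact Prod.ext hz1 hz2
  refine ⟨⟨(z, ξ), ⟨⟨by simpa using hl, by simpa using hu⟩, hmin⟩, ?_⟩, ?_⟩
  · intro p hp; exact huniq p hp.1 hp.2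
  · intro p hpf hpmin
    have := huniq p hpf hpmin
    rw [this]

theorem stmt0 (ρ α l u t : ℝ) (hρ : 0 < ρ) (hα : 0 < α) (hlu : l ≤ u) :
    (∃! p : ℝ × ℝ,
      (l ≤ p.1 + p.2 ∧ p.1 + p.2 ≤ u) ∧
      ∀ q : ℝ × ℝ, l ≤ q.1 + q.2 → q.1 + q.2 ≤ u →
        ρ / 2 * p.1 ^ 2 + α / 2 * p.2 ^ 2 - ρ * t * p.1 ≤
        ρ / 2 * q.1 ^ 2 + α / 2 * q.2 ^ 2 - ρ * t * q.1) ∧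
    ∀ p : ℝ × ℝ,
      (l ≤ p.1 + p.2 ∧ p.1 + p.2 ≤ u) →
      (∀ q : ℝ × ℝ, l ≤ q.1 + q.2 → q.1 + q.2 ≤ u →
        ρ / 2 * p.1 ^ 2 + α / 2 * p.2 ^ 2 - ρ * t * p.1 ≤
        ρ / 2 * q.1 ^ 2 + α / 2 * q.2 ^ 2 - ρ * t * q.1) →
      p.1 = sproj ρ α l u t := by
  have hρα : (0:ℝ) < ρ + α := by linarith
  unfold sproj
  by_cases h1 : t < l
  · simp only [if_pos h1]
    set z := (ρ * t + α * l) / (ρ + α) with hz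
    have hsum : z + (l - z) = l := by ring
    apply aux_min ρ α t l u z (l - z) (ρ * α * (l - t) / (ρ + α)) hρ hα
    · rw [hz]; field_simp; ring
    · rw [hz]; field_simp; ring
    · rw [hsum]
    · rw [hsum]; exact hlu
    · intro s hs hsu
      rw [hsum]
      have hlam : 0 ≤ ρ * α * (l - t) / (ρ + α) := by
        apply div_nonneg _ (le_of_lt hρα)
        nlinarith [mul_pos hρ hα]
      have hsl : 0 ≤ s - l := by linarith
      exact mul_nonneg hlam hsl
  · simp only [if_neg h1]
    by_cases h2 : u < t
    · simp only [if_pos h2]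
      set z := (ρ * t + α * u) / (ρ + α) with hz
      have hsum : z + (u - z) = u := by ring
      apply aux_min ρ α t l u z (u - z) (ρ * α * (u - t) / (ρ + α)) hρ hα
      · rw [hz]; field_simp; ring
      · rw [hz]; field_simp; ring
      · rw [hsum]; exact hlu
      · rw [hsum]
      · intro s hs hsu
        rw [hsum]
        have hlam : ρ * α * (u - t) / (ρ + α) ≤ 0 := by
          apply div_nonpos_of_nonpos_of_nonneg
          · nlinarith [mul_pos hρ hα]
          · linarith
        have hsu' : s - u ≤ 0 := by linarith
        nlinarith [mul_nonneg (neg_nonneg.2 hlam) (neg_nonneg.2 hsu')]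
    · simp only [if_neg h2]
      push_neg at h1 h2
      apply aux_min ρ α t l u t 0 0 hρ hα
      · ring
      · ring
      · simpa using h1
      · simpa using h2
      · intro s hs hsu; simp
end

section
/- Let ρ > 0, α > 0, ℓ ≤ u, and t ∈ ℝ with t < ℓ. If (z, ξ) satisfies the KKT conditions ρz − ρt − ν_ℓ + ν_u = 0, αξ − ν_ℓ + ν_u = 0, ℓ ≤ z + ξ ≤ u, ν_ℓ ≥ 0, ν_u ≥ 0, ν_ℓ(ℓ − z − ξ) = 0, ν_u(z + ξ − u) = 0, and ℓ < u, then ν_u = 0, ν_ℓ = ρα(ℓ − t)/(ρ + α) > 0, z = (ρt + αℓ)/(ρ + α), and ξ = ρ(ℓ − t)/(ρ + α). -/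
theorem stmt14 (ρ α l u t z ξ νl νu : ℝ) (hρ : 0 < ρ) (hα : 0 < α)
    (hlu : l ≤ u) (ht : t < l) (hlu' : l < u)
    (h1 : ρ * z - ρ * t - νl + νu = 0)
    (h2 : α * ξ - νl + νu = 0)
    (h3 : l ≤ z + ξ) (h4 : z + ξ ≤ u)
    (h5 : 0 ≤ νl) (h6 : 0 ≤ νu)
    (h7 : νl * (l - z - ξ) = 0)
    (h8 : νu * (z + ξ - u) = 0) :
    νu = 0 ∧ νl = ρ * α * (l - t) / (ρ + α) ∧ 0 < νl ∧
      z = (ρ * t + α * l) / (ρ + α) ∧ ξ = ρ * (l - t) / (ρ + α) := by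
  have hρα : 0 < ρ + α := by linarith
  have hνu : νu = 0 := by
    rcases eq_or_lt_of_le h6 with h | h
    · exact h.symm
    · exfalso
      have hzu : z + ξ = u := by
        rcases mul_eq_zero.mp h8 with h' | h'
        · linarith
        · linarith
      have hνl : νl = 0 := by
        rcases mul_eq_zero.mp h7 with h' | h'
        · exact h'
        · linarith
      -- then αξ = -νu, ρ(z - t) = -νu, so z + ξ < t < l ≤ u, contradiction
      nlinarith [mul_pos hρ hα, mul_pos hρ h, mul_pos hα h]
  subst hνu
  have hνlpos : 0 < νl := by
    rcases eq_or_lt_of_le h5 with h | h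
    · exfalso
      -- νl = 0: then ξ = 0, z = t, so z + ξ = t < l, contradicting h3
      have hξ : ξ = 0 := by nlinarith
      have hz : z = t := by nlinarith
      linarith [hz ▸ hξ ▸ h3]
    · exact h
  have hzl : z + ξ = l := by
    rcases mul_eq_zero.mp h7 with h' | h'
    · linarith
    · linarith
  have hνl : νl = ρ * α * (l - t) / (ρ + α) := by
    field_simp
    linear_combination ρ*α*hzl - α*h1 - ρ*h2
  refine ⟨rfl, hνl, hνlpos, ?_, ?_⟩
  · field_simp
    linear_combination α*hzl + h1 - h2
  · field_simp
    linear_combination ρ*hzl - h1 + h2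
end

section
/- Let ρ > 0, α > 0, ℓ < u, and t ∈ ℝ with ℓ ≤ t ≤ u. If (z, ξ, ν_ℓ, ν_u) satisfies the KKT conditions ρz − ρt − ν_ℓ + ν_u = 0, αξ − ν_ℓ + ν_u = 0, ℓ ≤ z + ξ ≤ u, ν_ℓ, ν_u ≥ 0, ν_ℓ(ℓ − z − ξ) = 0, ν_u(z + ξ − u) = 0, then ν_ℓ = ν_u = 0, z = t, and ξ = 0. -/
theorem stmt15 (ρ α l u t z ξ νl νu : ℝ) (hρ : 0 < ρ) (hα : 0 < α)
    (hlu : l < u) (ht1 : l ≤ t) (ht2 : t ≤ u)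
    (h1 : ρ * z - ρ * t - νl + νu = 0)
    (h2 : α * ξ - νl + νu = 0)
    (h3 : l ≤ z + ξ) (h4 : z + ξ ≤ u)
    (h5 : 0 ≤ νl) (h6 : 0 ≤ νu)
    (h7 : νl * (l - z - ξ) = 0)
    (h8 : νu * (z + ξ - u) = 0) :
    νl = 0 ∧ νu = 0 ∧ z = t ∧ ξ = 0 := by
  have heq : νl = νu := by
    rcases lt_trichotomy νl νu with h | h | h
    · -- νu > 0, so z + ξ = u
      have hνu : 0 < νu := lt_of_le_of_lt h5 h
      have hz : z + ξ = u := by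
        have := mul_eq_zero.mp h8
        rcases this with h' | h'
        · exact absurd h' (ne_of_gt hνu)
        · linarith
      -- z < t and ξ < 0
      have hz' : z < t := by nlinarith
      have hξ : ξ < 0 := by nlinarith
      linarith
    · exact h
    · -- νl > 0, so z + ξ = l
      have hνl : 0 < νl := lt_of_le_of_lt h6 h
      have hz : z + ξ = l := by
        have := mul_eq_zero.mp h7
        rcases this with h' | h'
        · exact absurd h' (ne_of_gt hνl)
        · linarith
      have hz' : t < z := by nlinarith
      have hξ : 0 < ξ := by nlinarith
      linarith
  have hξ0 : ξ = 0 := by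
    have : α * ξ = 0 := by linarith
    exact (mul_eq_zero.mp this).resolve_left (ne_of_gt hα)
  have hzt : z = t := by
    have : ρ * (z - t) = 0 := by linarith
    have := (mul_eq_zero.mp this).resolve_left (ne_of_gt hρ)
    linarith
  have hνl0 : νl = 0 := by
    by_contra hne
    have hνl : 0 < νl := lt_of_le_of_ne h5 (Ne.symm hne)
    have hl : z + ξ = l := by
      have := (mul_eq_zero.mp h7).resolve_left (ne_of_gt hνl)
      linarith
    have hνu : 0 < νu := heq ▸ hνl
    have hu : z + ξ = u := by
      have := (mul_eq_zero.mp h8).resolve_left (ne_of_gt hνu)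
      linarith
    linarith
  exact ⟨hνl0, heq ▸ hνl0, hzt, hξ0⟩
end
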